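/- arXiv:2409.18619 — 2 statements merged into one kernel-verified Lean document; each statement's English description precedes it below -/
import Mathlib

section
/- For any biframe L, the assignment ⟨f⟩ ↦ ⟨f̄⟩ sending the equivalence class of a surjective frame homomorphism f : L₀ → S to the class of the induced biframe extremal epimorphism f̄ : L₀ → f(L) (the pushout of f|_{L₁} ⊕ f|_{L₂} along q_L) is a closure operator B_L on the lattice 𝒮(L₀) of sublocale classes of L₀: it is monotone, inflationary (f ≲ f̄), and idempotent. -/
/-! Basic category-style notions for frames and biframes. -/

/-- `(K, i1, i2)` is a coproduct of the frames `L1` and `L2` in the category of frames. -/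
def IsCoprod {L1 L2 K : Type} [Order.Frame L1] [Order.Frame L2] [Order.Frame K]
    (i1 : FrameHom L1 K) (i2 : FrameHom L2 K) : Prop :=
  ∀ (Q : Type) [Order.Frame Q], ∀ (h1 : FrameHom L1 Q) (h2 : FrameHom L2 Q),
    ∃! k : FrameHom K Q, k.comp i1 = h1 ∧ k.comp i2 = h2

/-- `f' : C → P` (the pushout of `f` along `g`) and `g' : B → P` form a pushout square over
`f : A → B` and `g : A → C` in the category of frames. -/
def IsPushoutSquare {A B C P : Type} [Order.Frame A] [Order.Frame B] [Order.Frame C]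
    [Order.Frame P] (f : FrameHom A B) (g : FrameHom A C)
    (f' : FrameHom C P) (g' : FrameHom B P) : Prop :=
  g'.comp f = f'.comp g ∧
    ∀ (Q : Type) [Order.Frame Q], ∀ (u : FrameHom B Q) (v : FrameHom C Q),
      u.comp f = v.comp g → ∃! k : FrameHom P Q, k.comp g' = u ∧ k.comp f' = v

/-- A biframe `(L₀, L₁, L₂)`: an ambient frame `L₀` together with two component frames
`L₁, L₂` embedded in it by frame homomorphisms `e1, e2` (so the images are subframes),
such that the union of the images is a subbasis of `L₀`: every element of `L₀` is a join
of finite meets `e1 a ⊓ e2 b` of elements coming from the two components. -/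
structure Biframe where
  L0 : Type
  L1 : Type
  L2 : Type
  [fr0 : Order.Frame L0]
  [fr1 : Order.Frame L1]
  [fr2 : Order.Frame L2]
  e1 : FrameHom L1 L0
  e2 : FrameHom L2 L0
  inj1 : Function.Injective e1
  inj2 : Function.Injective e2
  gen : ∀ x : L0, ∃ A : Set (L1 × L2), x = sSup ((fun p => e1 p.1 ⊓ e2 p.2) '' A)

attribute [instance] Biframe.fr0 Biframe.fr1 Biframe.fr2

/-- A biframe homomorphism: a frame homomorphism of the ambient frames restricting to frame
homomorphisms of the component frames. -/
@[ext]
structure BiframeHom (L M : Biframe) where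
  h0 : FrameHom L.L0 M.L0
  h1 : FrameHom L.L1 M.L1
  h2 : FrameHom L.L2 M.L2
  comm1 : h0.comp L.e1 = M.e1.comp h1
  comm2 : h0.comp L.e2 = M.e2.comp h2

/-- Composition of biframe homomorphisms. -/
def BiframeHom.comp {L M N : Biframe} (g : BiframeHom M N) (f : BiframeHom L M) :
    BiframeHom L N where
  h0 := g.h0.comp f.h0
  h1 := g.h1.comp f.h1
  h2 := g.h2.comp f.h2
  comm1 := by rw [FrameHom.comp_assoc, f.comm1, ← FrameHom.comp_assoc, g.comm1,
    FrameHom.comp_assoc]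
  comm2 := by rw [FrameHom.comp_assoc, f.comm2, ← FrameHom.comp_assoc, g.comm2,
    FrameHom.comp_assoc]

/-- The identity biframe homomorphism. -/
def BiframeHom.id (L : Biframe) : BiframeHom L L where
  h0 := FrameHom.id _
  h1 := FrameHom.id _
  h2 := FrameHom.id _
  comm1 := by rw [FrameHom.id_comp, FrameHom.comp_id]
  comm2 := by rw [FrameHom.id_comp, FrameHom.comp_id]

/-- Monomorphisms in the category `BiFrm`. -/
def BiframeHom.IsMono {L M : Biframe} (m : BiframeHom L M) : Prop :=
  ∀ (N : Biframe) (g h : BiframeHom N L), m.comp g = m.comp h → g = h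

/-- Epimorphisms in the category `BiFrm`. -/
def BiframeHom.IsEpi {L M : Biframe} (f : BiframeHom L M) : Prop :=
  ∀ (N : Biframe) (g h : BiframeHom M N), g.comp f = h.comp f → g = h

/-- Isomorphisms in the category `BiFrm`. -/
def BiframeHom.IsIso {L M : Biframe} (f : BiframeHom L M) : Prop :=
  ∃ g : BiframeHom M L, g.comp f = BiframeHom.id L ∧ f.comp g = BiframeHom.id M

/-- Extremal epimorphisms in the category `BiFrm`: epimorphisms `f` such that whenever
`f = m ∘ h` with `m` a monomorphism, `m` is an isomorphism. -/
def BiframeHom.IsExtremalEpi {L M : Biframe} (f : BiframeHom L M) : Prop :=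
  f.IsEpi ∧ ∀ (N : Biframe) (h : BiframeHom L N) (m : BiframeHom N M),
    m.IsMono → f = m.comp h → m.IsIso

/-- The underlying frame homomorphism `f₀` of the biframe homomorphism `f` is the pushout of
`f₁ ⊕ f₂` along `q_L` in `Frm`: for any presentation of the coproducts `L₁ ⊕ L₂` and
`M₁ ⊕ M₂` with the canonical quotient maps `q_L`, `q_M`, and the induced map
`F = f₁ ⊕ f₂` between them, the square `(F, q_L, f₀, q_M)` is a pushout square. -/
def BiframeHom.IsCanonicalPushout {L M : Biframe} (f : BiframeHom L M) : Prop :=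
  ∀ (K : Type) [Order.Frame K], ∀ (i1 : FrameHom L.L1 K) (i2 : FrameHom L.L2 K),
    IsCoprod i1 i2 →
    ∀ qL : FrameHom K L.L0, qL.comp i1 = L.e1 → qL.comp i2 = L.e2 →
    ∀ (K' : Type) [Order.Frame K'], ∀ (j1 : FrameHom M.L1 K') (j2 : FrameHom M.L2 K'),
      IsCoprod j1 j2 →
      ∀ qM : FrameHom K' M.L0, qM.comp j1 = M.e1 → qM.comp j2 = M.e2 →
      ∀ F : FrameHom K K', F.comp i1 = j1.comp f.h1 → F.comp i2 = j2.comp f.h2 →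
        IsPushoutSquare F qL f.h0 qM

/-- `fbar : L₀ → S'` is the sublocale quotient of `L₀` induced by the sublocale quotient
`f : L₀ → S` via the biframe structure of `L`: writing `f|_{Lᵢ} = mᵢ ∘ pᵢ` for the
(surjection, injection)-factorizations of the restrictions of `f` to the components, `fbar`
is the pushout in `Frm` of `p₁ ⊕ p₂` along the quotient `q_L : L₁ ⊕ L₂ → L₀`. -/
def Induced (L : Biframe) {S S' : Type} [Order.Frame S] [Order.Frame S']
    (f : FrameHom L.L0 S) (fbar : FrameHom L.L0 S') : Prop :=
  ∃ (F1 : Type) (inst1 : Order.Frame F1) (F2 : Type) (inst2 : Order.Frame F2),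
    letI := inst1
    letI := inst2
    ∃ (p1 : FrameHom L.L1 F1) (m1 : FrameHom F1 S)
      (p2 : FrameHom L.L2 F2) (m2 : FrameHom F2 S),
      Function.Surjective p1 ∧ Function.Injective m1 ∧ m1.comp p1 = f.comp L.e1 ∧
      Function.Surjective p2 ∧ Function.Injective m2 ∧ m2.comp p2 = f.comp L.e2 ∧
      ∀ (K : Type) [Order.Frame K], ∀ (i1 : FrameHom L.L1 K) (i2 : FrameHom L.L2 K),
        IsCoprod i1 i2 →
        ∀ qL : FrameHom K L.L0, qL.comp i1 = L.e1 → qL.comp i2 = L.e2 →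
        ∀ (K' : Type) [Order.Frame K'], ∀ (j1 : FrameHom F1 K') (j2 : FrameHom F2 K'),
          IsCoprod j1 j2 →
          ∀ P : FrameHom K K', P.comp i1 = j1.comp p1 → P.comp i2 = j2.comp p2 →
            ∃ w : FrameHom K' S', IsPushoutSquare P qL fbar w

/- A frame homomorphism `v` out of `L₀` factors through `f̄` exactly when, on each component
`Lᵢ`, it identifies whatever `f` identifies: `f̄` is a pushout of `p₁ ⊕ p₂`, where
`pᵢ : Lᵢ → f[Lᵢ]` is the corestriction of `f`, and a map out of `f[L₁] ⊕ f[L₂]` is a pair of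
maps out of the `f[Lᵢ]`. Applied to `v = f` this gives `f ≲ f̄`; applied to `f̄` it shows that `f̄` identifies on the
components exactly what `f` does, and monotonicity and idempotence follow. To use the pushout
property at all one needs coproducts of frames; they are realised by C-ideals. -/

section FrameCoproduct

variable {A B Q : Type} [Order.Frame A] [Order.Frame B] [Order.Frame Q]

/-- C-ideals of `A × B`; they realise the coproduct of the frames `A` and `B`. -/
structure CIdeal (A B : Type) [Order.Frame A] [Order.Frame B] : Type where
  carrier : Set (A × B)
  mem_of_le' : ∀ {p q : A × B}, q ≤ p → p ∈ carrier → q ∈ carrier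
  sSup_fst_mem' : ∀ (s : Set A) (b : B), (∀ a ∈ s, (a, b) ∈ carrier) → (sSup s, b) ∈ carrier
  sSup_snd_mem' : ∀ (a : A) (s : Set B), (∀ b ∈ s, (a, b) ∈ carrier) → (a, sSup s) ∈ carrier

namespace CIdeal

instance : SetLike (CIdeal A B) (A × B) where
  coe := carrier
  coe_injective := by rintro ⟨c, _, _, _⟩ ⟨c', _, _, _⟩ h; congr

instance : PartialOrder (CIdeal A B) := .ofSetLike (CIdeal A B) (A × B)

variable {D E : CIdeal A B} {p q : A × B}

theorem mem_of_le (D : CIdeal A B) (h : q ≤ p) (hp : p ∈ D) : q ∈ D := D.mem_of_le' h hp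

theorem sSup_fst_mem (D : CIdeal A B) {s : Set A} {b : B} (h : ∀ a ∈ s, (a, b) ∈ D) :
    (sSup s, b) ∈ D := D.sSup_fst_mem' s b h

theorem sSup_snd_mem (D : CIdeal A B) {a : A} {s : Set B} (h : ∀ b ∈ s, (a, b) ∈ D) :
    (a, sSup s) ∈ D := D.sSup_snd_mem' a s h

theorem bot_fst_mem (D : CIdeal A B) (b : B) : ((⊥ : A), b) ∈ D := by
  simpa using D.sSup_fst_mem (s := ∅) (b := b) (by simp)

theorem bot_snd_mem (D : CIdeal A B) (a : A) : (a, (⊥ : B)) ∈ D := by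
  simpa using D.sSup_snd_mem (a := a) (s := ∅) (by simp)

instance : InfSet (CIdeal A B) where
  sInf S :=
    { carrier := {p | ∀ D ∈ S, p ∈ D}
      mem_of_le' := fun h hp D hD => D.mem_of_le h (hp D hD)
      sSup_fst_mem' := fun _ _ h D hD => D.sSup_fst_mem fun a ha => h a ha D hD
      sSup_snd_mem' := fun _ _ h D hD => D.sSup_snd_mem fun b hb => h b hb D hD }

theorem mem_sInf {S : Set (CIdeal A B)} : p ∈ sInf S ↔ ∀ D ∈ S, p ∈ D := Iff.rfl

instance : CompleteLattice (CIdeal A B) :=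
  completeLatticeOfInf _ fun _ =>
    ⟨fun D hD _ hp => mem_sInf.1 hp D hD, fun _ hE _ hp => mem_sInf.2 fun _ hD => hE hD hp⟩

theorem mem_top (p : A × B) : p ∈ (⊤ : CIdeal A B) :=
  mem_sInf.2 fun _ h => absurd h (Set.notMem_empty _)

theorem mem_inf : p ∈ D ⊓ E ↔ p ∈ D ∧ p ∈ E := by
  change p ∈ sInf {D, E} ↔ _
  simp only [mem_sInf, Set.mem_insert_iff, Set.mem_singleton_iff, forall_eq_or_imp, forall_eq]

def himp (D E : CIdeal A B) : CIdeal A B where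
  carrier := {q | ∀ r ∈ D, q ⊓ r ∈ E}
  mem_of_le' := fun h hq r hr => E.mem_of_le (inf_le_inf h le_rfl) (hq r hr)
  sSup_fst_mem' := fun s b h r hr => by
    have hE := E.sSup_fst_mem (s := (· ⊓ r.1) '' s) (b := b ⊓ r.2) <| by
      rintro _ ⟨a, ha, rfl⟩
      exact h a ha r hr
    rwa [sSup_image, ← sSup_inf_eq] at hE
  sSup_snd_mem' := fun a s h r hr => by
    have hE := E.sSup_snd_mem (a := a ⊓ r.1) (s := (· ⊓ r.2) '' s) <| by
      rintro _ ⟨b, hb, rfl⟩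
      exact h b hb r hr
    rwa [sSup_image, ← sSup_inf_eq] at hE

instance : Order.Frame (CIdeal A B) :=
  .ofMinimalAxioms
    { inf_sSup_le_iSup_inf := fun D S p hp => by
        obtain ⟨hpD, hpS⟩ := mem_inf.1 hp
        have hS : sSup S ≤ himp D (⨆ E ∈ S, D ⊓ E) := sSup_le fun E hE q hq r hr =>
          le_iSup₂ (f := fun E (_ : E ∈ S) => D ⊓ E) E hE <|
            mem_inf.2 ⟨D.mem_of_le inf_le_right hr, E.mem_of_le inf_le_left hq⟩
        simpa using hS hpS p hpD }

/-- The C-ideal generated by `(a, ⊤)`: every C-ideal contains `A × {⊥}` and `{⊥} × B`. -/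
def ofFst (a : A) : CIdeal A B where
  carrier := {p | p.1 ≤ a ∨ p.2 = ⊥}
  mem_of_le' := by
    rintro p q hqp (h | h)
    · exact .inl (hqp.1.trans h)
    · exact .inr (le_bot_iff.1 (h ▸ hqp.2))
  sSup_fst_mem' := by
    intro s b h
    by_cases hb : b = ⊥
    · exact .inr hb
    · exact .inl (sSup_le fun a' ha' => (h a' ha').resolve_right hb)
  sSup_snd_mem' := by
    intro a' s h
    by_cases ha : a' ≤ a
    · exact .inl ha
    · exact .inr (le_bot_iff.1 (sSup_le fun b hb => ((h b hb).resolve_left ha).le))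

def ofSnd (b : B) : CIdeal A B where
  carrier := {p | p.2 ≤ b ∨ p.1 = ⊥}
  mem_of_le' := by
    rintro p q hqp (h | h)
    · exact .inl (hqp.2.trans h)
    · exact .inr (le_bot_iff.1 (h ▸ hqp.1))
  sSup_fst_mem' := by
    intro s b' h
    by_cases hb : b' ≤ b
    · exact .inl hb
    · exact .inr (le_bot_iff.1 (sSup_le fun a ha => ((h a ha).resolve_left hb).le))
  sSup_snd_mem' := by
    intro a s h
    by_cases ha : a = ⊥
    · exact .inr ha
    · exact .inl (sSup_le fun b' hb' => (h b' hb').resolve_right ha)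

theorem mem_ofFst {a : A} : p ∈ ofFst (B := B) a ↔ p.1 ≤ a ∨ p.2 = ⊥ := Iff.rfl

theorem mem_ofSnd {b : B} : p ∈ ofSnd (A := A) b ↔ p.2 ≤ b ∨ p.1 = ⊥ := Iff.rfl

theorem ofFst_sSup (s : Set A) : ofFst (B := B) (sSup s) = ⨆ a ∈ s, ofFst a := by
  refine le_antisymm ?_ (iSup₂_le fun a ha p hp => hp.imp_left fun h => h.trans (le_sSup ha))
  rintro ⟨x, y⟩ (hx | rfl)
  · have hmem := (⨆ a ∈ s, ofFst (B := B) a).sSup_fst_mem (s := (x ⊓ ·) '' s) (b := y) <| by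
      rintro _ ⟨a, ha, rfl⟩
      exact le_iSup₂ (f := fun a (_ : a ∈ s) => ofFst (B := B) a) a ha (.inl inf_le_right)
    rwa [sSup_image, ← inf_sSup_eq, inf_eq_left.2 hx] at hmem
  · exact bot_snd_mem _ x

theorem ofSnd_sSup (s : Set B) : ofSnd (A := A) (sSup s) = ⨆ b ∈ s, ofSnd b := by
  refine le_antisymm ?_ (iSup₂_le fun b hb p hp => hp.imp_left fun h => h.trans (le_sSup hb))
  rintro ⟨x, y⟩ (hy | rfl)
  · have hmem := (⨆ b ∈ s, ofSnd (A := A) b).sSup_snd_mem (a := x) (s := (y ⊓ ·) '' s) <| by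
      rintro _ ⟨b, hb, rfl⟩
      exact le_iSup₂ (f := fun b (_ : b ∈ s) => ofSnd (A := A) b) b hb (.inl inf_le_right)
    rwa [sSup_image, ← inf_sSup_eq, inf_eq_left.2 hy] at hmem
  · exact bot_fst_mem _ y

def inl : FrameHom A (CIdeal A B) where
  toFun := ofFst
  map_inf' a a' := SetLike.ext fun p => by simp only [mem_ofFst, mem_inf, le_inf_iff]; tauto
  map_top' := SetLike.ext fun p => iff_of_true (mem_ofFst.2 (.inl le_top)) (mem_top p)
  map_sSup' s := by rw [ofFst_sSup, sSup_image]

def inr : FrameHom B (CIdeal A B) where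
  toFun := ofSnd
  map_inf' b b' := SetLike.ext fun p => by simp only [mem_ofSnd, mem_inf, le_inf_iff]; tauto
  map_top' := SetLike.ext fun p => iff_of_true (mem_ofSnd.2 (.inl le_top)) (mem_top p)
  map_sSup' s := by rw [ofSnd_sSup, sSup_image]

def liftFun (h1 : FrameHom A Q) (h2 : FrameHom B Q) (D : CIdeal A B) : Q :=
  ⨆ p ∈ (D : Set (A × B)), h1 p.1 ⊓ h2 p.2

def liftAdjoint (h1 : FrameHom A Q) (h2 : FrameHom B Q) (c : Q) : CIdeal A B where
  carrier := {p | h1 p.1 ⊓ h2 p.2 ≤ c}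
  mem_of_le' h hp :=
    (inf_le_inf (OrderHomClass.mono h1 h.1) (OrderHomClass.mono h2 h.2)).trans hp
  sSup_fst_mem' s b h := by
    change h1 (sSup s) ⊓ h2 b ≤ c
    rw [map_sSup, sSup_image, iSup₂_inf_eq]
    exact iSup₂_le h
  sSup_snd_mem' a s h := by
    change h1 a ⊓ h2 (sSup s) ≤ c
    rw [map_sSup, sSup_image, inf_iSup₂_eq]
    exact iSup₂_le h

variable {h1 : FrameHom A Q} {h2 : FrameHom B Q}

theorem le_liftFun (hp : p ∈ D) : h1 p.1 ⊓ h2 p.2 ≤ liftFun h1 h2 D :=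
  le_iSup₂ (f := fun p (_ : p ∈ (D : Set (A × B))) => h1 p.1 ⊓ h2 p.2) p hp

theorem gc_liftFun : GaloisConnection (liftFun h1 h2) (liftAdjoint h1 h2) :=
  fun _ _ => ⟨fun h _ hp => le_liftFun hp |>.trans h, fun h => iSup₂_le fun _ hp => h hp⟩

def lift (h1 : FrameHom A Q) (h2 : FrameHom B Q) : FrameHom (CIdeal A B) Q where
  toFun := liftFun h1 h2
  map_inf' D E := by
    refine le_antisymm (le_inf (gc_liftFun.monotone_l inf_le_left)
      (gc_liftFun.monotone_l inf_le_right)) ?_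
    rw [liftFun, liftFun, biSup_inf_biSup]
    refine iSup₂_le fun ⟨p, q⟩ ⟨hp, hq⟩ => le_trans ?_ <|
      le_liftFun (mem_inf.2 ⟨D.mem_of_le inf_le_left hp, E.mem_of_le inf_le_right hq⟩)
    simp only [Prod.fst_inf, Prod.snd_inf, map_inf]
    exact (inf_inf_inf_comm _ _ _ _).le
  map_top' := top_unique <| by simpa using le_liftFun (h1 := h1) (h2 := h2) (mem_top (⊤, ⊤))
  map_sSup' S := by rw [gc_liftFun.l_sSup, sSup_image]

theorem lift_comp_inl : (lift h1 h2).comp inl = h1 := by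
  refine FrameHom.ext fun a => le_antisymm (iSup₂_le ?_) ?_
  · rintro ⟨x, y⟩ (hx | rfl)
    · exact inf_le_left.trans (OrderHomClass.mono h1 hx)
    · simp
  · change h1 a ≤ liftFun h1 h2 (ofFst a)
    simpa using le_liftFun (h1 := h1) (h2 := h2) (mem_ofFst.2 (.inl le_rfl) : (a, ⊤) ∈ ofFst a)

theorem lift_comp_inr : (lift h1 h2).comp inr = h2 := by
  refine FrameHom.ext fun b => le_antisymm (iSup₂_le ?_) ?_
  · rintro ⟨x, y⟩ (hy | rfl)
    · exact inf_le_right.trans (OrderHomClass.mono h2 hy)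
    · simp
  · change h2 b ≤ liftFun h1 h2 (ofSnd b)
    simpa using le_liftFun (h1 := h1) (h2 := h2) (mem_ofSnd.2 (.inl le_rfl) : (⊤, b) ∈ ofSnd b)

theorem eq_iSup_inl_inf_inr (D : CIdeal A B) : D = ⨆ p ∈ D, inl p.1 ⊓ inr p.2 := by
  refine le_antisymm (fun p hp => le_iSup₂ (f := fun p (_ : p ∈ D) => inl p.1 ⊓ inr p.2) p hp <|
    mem_inf.2 ⟨.inl le_rfl, .inl le_rfl⟩) (iSup₂_le fun q hq => ?_)
  rintro ⟨x, y⟩ hr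
  obtain ⟨hx | rfl, hy | rfl⟩ := mem_inf.1 hr
  · exact D.mem_of_le ⟨hx, hy⟩ hq
  · exact D.bot_fst_mem y
  · exact D.bot_snd_mem x
  · exact D.bot_snd_mem ⊥

theorem isCoprod : IsCoprod (inl : FrameHom A (CIdeal A B)) (inr : FrameHom B (CIdeal A B)) := by
  intro Q _ h1 h2
  refine ⟨lift h1 h2, ⟨lift_comp_inl, lift_comp_inr⟩, ?_⟩
  rintro k ⟨rfl, rfl⟩
  refine FrameHom.ext fun D => ?_
  conv_lhs => rw [eq_iSup_inl_inf_inr D]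
  simp only [map_iSup, map_inf]
  rfl

def map {A' B' : Type} [Order.Frame A'] [Order.Frame B'] (p1 : FrameHom A A')
    (p2 : FrameHom B B') : FrameHom (CIdeal A B) (CIdeal A' B') :=
  lift (inl.comp p1) (inr.comp p2)

theorem map_comp_inl {A' B' : Type} [Order.Frame A'] [Order.Frame B'] (p1 : FrameHom A A')
    (p2 : FrameHom B B') : (map p1 p2).comp inl = inl.comp p1 :=
  lift_comp_inl

theorem map_comp_inr {A' B' : Type} [Order.Frame A'] [Order.Frame B'] (p1 : FrameHom A A')
    (p2 : FrameHom B B') : (map p1 p2).comp inr = inr.comp p2 :=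
  lift_comp_inr

end CIdeal

end FrameCoproduct

theorem IsCoprod.hom_ext {L1 L2 K Q : Type} [Order.Frame L1] [Order.Frame L2] [Order.Frame K]
    [Order.Frame Q] {i1 : FrameHom L1 K} {i2 : FrameHom L2 K} (hc : IsCoprod i1 i2)
    {k k' : FrameHom K Q} (h1 : k.comp i1 = k'.comp i1) (h2 : k.comp i2 = k'.comp i2) :
    k = k' :=
  (hc Q _ _).unique ⟨h1, h2⟩ ⟨rfl, rfl⟩

theorem Function.Surjective.exists_frameHom_comp_eq {A B C : Type} [Order.Frame A]
    [Order.Frame B] [Order.Frame C] {p : FrameHom A B} (hp : Surjective p) {q : FrameHom A C}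
    (hq : FactorsThrough q p) : ∃ k : FrameHom B C, k.comp p = q := by
  refine ⟨
    { toFun := q ∘ surjInv hp
      map_inf' := fun b b' => ?_
      map_top' := ?_
      map_sSup' := fun s => ?_ }, FrameHom.ext fun a => hq (surjInv_eq hp (p a))⟩
  · change q _ = q _ ⊓ q _
    rw [← map_inf]
    exact hq (by rw [map_inf, surjInv_eq hp, surjInv_eq hp, surjInv_eq hp])
  · change q _ = ⊤
    rw [← map_top q]
    exact hq (by rw [surjInv_eq hp, map_top])
  · change q _ = _
    rw [Set.image_comp, ← map_sSup]
    exact hq (by rw [surjInv_eq hp, map_sSup, ← Set.image_comp, comp_surjInv, Set.image_id])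

namespace Biframe

variable (L : Biframe) {S T Q : Type}

def ComponentsFactorThrough (v : L.L0 → Q) (f : L.L0 → S) : Prop :=
  (v ∘ L.e1).FactorsThrough (f ∘ L.e1) ∧ (v ∘ L.e2).FactorsThrough (f ∘ L.e2)

namespace ComponentsFactorThrough

variable {L}

theorem refl (f : L.L0 → S) : L.ComponentsFactorThrough f f :=
  ⟨fun _ _ h => h, fun _ _ h => h⟩

theorem trans {v : L.L0 → Q} {g : L.L0 → T} {f : L.L0 → S} (hvg : L.ComponentsFactorThrough v g)
    (hgf : L.ComponentsFactorThrough g f) : L.ComponentsFactorThrough v f :=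
  ⟨fun _ _ h => hvg.1 (hgf.1 h), fun _ _ h => hvg.2 (hgf.2 h)⟩

theorem comp_left (h : T → S) (g : L.L0 → T) : L.ComponentsFactorThrough (h ∘ g) g :=
  ⟨fun _ _ hxy => congrArg h hxy, fun _ _ hxy => congrArg h hxy⟩

end ComponentsFactorThrough

end Biframe

namespace Induced

variable {L : Biframe} {S S' Q : Type} [Order.Frame S] [Order.Frame S'] [Order.Frame Q]
  {f : FrameHom L.L0 S} {fbar : FrameHom L.L0 S'}

theorem exists_isPushoutSquare (h : Induced L f fbar) :
    ∃ (F1 F2 : Type) (_ : Order.Frame F1) (_ : Order.Frame F2)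
      (p1 : FrameHom L.L1 F1) (p2 : FrameHom L.L2 F2) (w : FrameHom (CIdeal F1 F2) S'),
      Function.Surjective p1 ∧ Function.Surjective p2 ∧
      (∀ x y, p1 x = p1 y ↔ f (L.e1 x) = f (L.e1 y)) ∧
      (∀ x y, p2 x = p2 y ↔ f (L.e2 x) = f (L.e2 y)) ∧
      IsPushoutSquare (CIdeal.map p1 p2) (CIdeal.lift L.e1 L.e2) fbar w := by
  obtain ⟨F1, _, F2, _, p1, m1, p2, m2, hp1, hm1, hc1, hp2, hm2, hc2, hpush⟩ := h
  obtain ⟨w, hw⟩ := hpush _ CIdeal.inl CIdeal.inr CIdeal.isCoprod _ CIdeal.lift_comp_inl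
    CIdeal.lift_comp_inr _ CIdeal.inl CIdeal.inr CIdeal.isCoprod _ CIdeal.lift_comp_inl
    CIdeal.lift_comp_inr
  have hk1 (z : L.L1) : m1 (p1 z) = f (L.e1 z) := DFunLike.congr_fun hc1 z
  have hk2 (z : L.L2) : m2 (p2 z) = f (L.e2 z) := DFunLike.congr_fun hc2 z
  refine ⟨F1, F2, _, _, p1, p2, w, hp1, hp2, fun x y => ?_, fun x y => ?_, hw⟩
  · rw [← hk1, ← hk1, hm1.eq_iff]
  · rw [← hk2, ← hk2, hm2.eq_iff]

theorem componentsFactorThrough (h : Induced L f fbar) : L.ComponentsFactorThrough fbar f := by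
  obtain ⟨F1, F2, _, _, p1, p2, w, -, -, hk1, hk2, hw, -⟩ := h.exists_isPushoutSquare
  have he1 : fbar.comp L.e1 = w.comp (CIdeal.inl.comp p1) := by
    rw [← CIdeal.map_comp_inl p1 p2, ← FrameHom.comp_assoc, hw, FrameHom.comp_assoc,
      CIdeal.lift_comp_inl]
  have he2 : fbar.comp L.e2 = w.comp (CIdeal.inr.comp p2) := by
    rw [← CIdeal.map_comp_inr p1 p2, ← FrameHom.comp_assoc, hw, FrameHom.comp_assoc,
      CIdeal.lift_comp_inr]
  refine ⟨fun x y hxy => ?_, fun x y hxy => ?_⟩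
  · change (fbar.comp L.e1) x = (fbar.comp L.e1) y
    rw [he1]
    exact congrArg (w ∘ CIdeal.inl) ((hk1 x y).2 hxy)
  · change (fbar.comp L.e2) x = (fbar.comp L.e2) y
    rw [he2]
    exact congrArg (w ∘ CIdeal.inr) ((hk2 x y).2 hxy)

theorem exists_comp_eq (h : Induced L f fbar) (v : FrameHom L.L0 Q)
    (hv : L.ComponentsFactorThrough v f) : ∃ k : FrameHom S' Q, k.comp fbar = v := by
  obtain ⟨F1, F2, _, _, p1, p2, w, hp1, hp2, hk1, hk2, hw⟩ := h.exists_isPushoutSquare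
  obtain ⟨u1, hu1⟩ := hp1.exists_frameHom_comp_eq (q := v.comp L.e1)
    fun x y hxy => hv.1 ((hk1 x y).1 hxy)
  obtain ⟨u2, hu2⟩ := hp2.exists_frameHom_comp_eq (q := v.comp L.e2)
    fun x y hxy => hv.2 ((hk2 x y).1 hxy)
  obtain ⟨k, ⟨-, hk⟩, -⟩ := hw.2 Q (CIdeal.lift u1 u2) v <| CIdeal.isCoprod.hom_ext
    (by rw [FrameHom.comp_assoc, FrameHom.comp_assoc, CIdeal.map_comp_inl,
      ← FrameHom.comp_assoc, CIdeal.lift_comp_inl, CIdeal.lift_comp_inl, hu1])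
    (by rw [FrameHom.comp_assoc, FrameHom.comp_assoc, CIdeal.map_comp_inr,
      ← FrameHom.comp_assoc, CIdeal.lift_comp_inr, CIdeal.lift_comp_inr, hu2])
  exact ⟨k, hk⟩

end Induced

theorem induced_closure_operator_general (L : Biframe)
    {S S' T T' S'' : Type} [Order.Frame S] [Order.Frame S'] [Order.Frame T]
    [Order.Frame T'] [Order.Frame S'']
    (f : FrameHom L.L0 S)
    (fbar : FrameHom L.L0 S') (hfbar : Induced L f fbar)
    (g : FrameHom L.L0 T)
    (gbar : FrameHom L.L0 T') (hgbar : Induced L g gbar)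
    (fbarbar : FrameHom L.L0 S'') (hfbarbar : Induced L fbar fbarbar) :
    -- monotone
    ((∃ h : FrameHom T S, h.comp g = f) → ∃ h : FrameHom T' S', h.comp gbar = fbar) ∧
    -- inflationary : `f ≲ f̄`
    (∃ h : FrameHom S' S, h.comp fbar = f) ∧
    -- idempotent : `f̄̄ ≃ f̄`
    ((∃ h : FrameHom S'' S', h.comp fbarbar = fbar) ∧
      (∃ h : FrameHom S' S'', h.comp fbar = fbarbar)) := by
  refine ⟨?_, hfbar.exists_comp_eq f (.refl f), hfbarbar.exists_comp_eq fbar (.refl fbar),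
    hfbar.exists_comp_eq fbarbar (hfbarbar.componentsFactorThrough.trans
      hfbar.componentsFactorThrough)⟩
  rintro ⟨h, rfl⟩
  exact hgbar.exists_comp_eq fbar
    (hfbar.componentsFactorThrough.trans (.comp_left h g))

/-- For a biframe `L`, the assignment `⟨f⟩ ↦ ⟨f̄⟩`, sending (the class of) a surjective
frame homomorphism `f : L₀ → S` to (the class of) the induced quotient
`f̄ : L₀ → f(L)`, is a closure operator `B_L` on the preordered collection `𝒮(L₀)` of
sublocale quotients of `L₀` (where `f ≲ g` iff `f` factors through `g`): it is monotone,
inflationary and idempotent. -/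
theorem induced_closure_operator (L : Biframe)
    {S S' T T' S'' : Type} [Order.Frame S] [Order.Frame S'] [Order.Frame T]
    [Order.Frame T'] [Order.Frame S'']
    (f : FrameHom L.L0 S) (hf : Function.Surjective f)
    (fbar : FrameHom L.L0 S') (hfbar : Induced L f fbar)
    (g : FrameHom L.L0 T) (hg : Function.Surjective g)
    (gbar : FrameHom L.L0 T') (hgbar : Induced L g gbar)
    (fbarbar : FrameHom L.L0 S'') (hfbarbar : Induced L fbar fbarbar) :
    -- monotone
    ((∃ h : FrameHom T S, h.comp g = f) → ∃ h : FrameHom T' S', h.comp gbar = fbar) ∧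
    -- inflationary : `f ≲ f̄`
    (∃ h : FrameHom S' S, h.comp fbar = f) ∧
    -- idempotent : `f̄̄ ≃ f̄`
    ((∃ h : FrameHom S'' S', h.comp fbarbar = fbar) ∧
      (∃ h : FrameHom S' S'', h.comp fbar = fbarbar)) :=
  induced_closure_operator_general L f fbar hfbar g gbar hgbar fbarbar hfbarbar
end

section
/- For a biframe L, the lattice 𝒮(L) of subbilocales is isomorphic to the sub-meet-semilattice of the coframe 𝒮(L₀) of sublocales of the ambient frame generated by 𝒮(e_{L₁})[𝒮(L₁)] ∪ 𝒮(e_{L₂})[𝒮(L₂)], where 𝒮(e_{Lᵢ}) : 𝒮(Lᵢ) → 𝒮(L₀) is the image map of sublocales along the subframe inclusion e_{Lᵢ} : Lᵢ → L₀ (sending a sublocale quotient fᵢ of Lᵢ to the pushout of fᵢ along e_{Lᵢ}). -/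
/-- A frame congruence: an equivalence relation respecting finite meets and arbitrary
(set-indexed) joins. -/
def IsFrameCong {L : Type} [Order.Frame L] (r : L → L → Prop) : Prop :=
  Equivalence r ∧
    (∀ a b c d : L, r a b → r c d → r (a ⊓ c) (b ⊓ d)) ∧
    (∀ (ι : Type) (a b : ι → L), (∀ i, r (a i) (b i)) → r (⨆ i, a i) (⨆ i, b i))

/-- The frame congruence generated by a relation. -/
def congGen {L : Type} [Order.Frame L] (R : Set (L × L)) : L → L → Prop :=
  fun a b => ∀ r : L → L → Prop, IsFrameCong r → (∀ p ∈ R, r p.1 p.2) → r a b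

/-- `r` represents a subbilocale of `L`: it is the kernel congruence of (the ambient frame
homomorphism of) some extremal epimorphism in `BiFrm` with domain `L`. These relations,
ordered by reverse inclusion, form a faithful copy of the poset `𝒮(L)` of subbilocales. -/
def IsSubbilocaleRep (L : Biframe) (r : L.L0 → L.L0 → Prop) : Prop :=
  ∃ (N : Biframe) (f : BiframeHom L N), f.IsExtremalEpi ∧
    ∀ a b : L.L0, r a b ↔ f.h0 a = f.h0 b

/-- The image `𝒮(e_{L₁})⟨f₁⟩` in `𝒮(L₀)` of a sublocale of the first component `L₁`, given
by a congruence `r1` on `L₁`: the pushout along the inclusion `e_{L₁}` corresponds to the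
congruence of `L₀` generated by the image of `r1`. -/
def imCong1 (L : Biframe) (r1 : L.L1 → L.L1 → Prop) : L.L0 → L.L0 → Prop :=
  congGen {p | ∃ a b : L.L1, r1 a b ∧ p = (L.e1 a, L.e1 b)}

/-- The image `𝒮(e_{L₂})⟨f₂⟩` in `𝒮(L₀)` of a sublocale of the second component. -/
def imCong2 (L : Biframe) (r2 : L.L2 → L.L2 → Prop) : L.L0 → L.L0 → Prop :=
  congGen {p | ∃ a b : L.L2, r2 a b ∧ p = (L.e2 a, L.e2 b)}

/-!
A congruence `r` on `L₀` is the kernel of an extremal epimorphism out of `L` exactly when it is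
generated by its traces on the two components, `L.genByComponents r = r`. If `r` is the kernel of
an extremal epimorphism `f`, then `f` factors through the quotient biframe
`L / genByComponents r` by a map that is injective on the components, hence a monomorphism, hence
an isomorphism. Conversely, if `r` is generated on the components, any monomorphism through which
`L → L / r` factors is injective on the components (monomorphisms are tested against the free
biframes on one generator), and this forces it to be bijective.

The fixed points of `genByComponents` contain the images `imCong1 L r₁`, `imCong2 L r₂` and are
closed under joins of congruences, while each fixed point is the join of the images of its own two
traces; so they are exactly the generated sub-meet-semilattice.
-/

open Function

section Congruences

variable {A B : Type} [Order.Frame A] [Order.Frame B] {c : A → A → Prop}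

theorem isFrameCong_congGen (R : Set (A × A)) : IsFrameCong (congGen R) :=
  ⟨⟨fun a _ hr _ => hr.1.refl a, fun h r hr hR => hr.1.symm (h r hr hR),
      fun h h' r hr hR => hr.1.trans (h r hr hR) (h' r hr hR)⟩,
    fun _ _ _ _ h h' r hr hR => hr.2.1 _ _ _ _ (h r hr hR) (h' r hr hR),
    fun ι a b h r hr hR => hr.2.2 ι a b fun i => h i r hr hR⟩

theorem congGen_le {R : Set (A × A)} (hc : IsFrameCong c) (hR : ∀ p ∈ R, c p.1 p.2) :
    congGen R ≤ c :=
  fun _ _ h => h c hc hR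

theorem congGen_of_mem {R : Set (A × A)} {a b : A} (h : (a, b) ∈ R) : congGen R a b :=
  fun _ _ hR => hR _ h

theorem isFrameCong_ker (f : FrameHom A B) : IsFrameCong fun a b => f a = f b :=
  ⟨⟨fun _ => rfl, Eq.symm, Eq.trans⟩,
    fun _ _ _ _ (h : f _ = f _) (h' : f _ = f _) => by simp only [map_inf, h, h'],
    fun _ _ _ h => by simp only [map_iSup, h]⟩

theorem IsFrameCong.comap {r : B → B → Prop} (hr : IsFrameCong r) (f : FrameHom A B) :
    IsFrameCong fun a b => r (f a) (f b) :=
  ⟨⟨fun _ => hr.1.refl _, hr.1.symm, hr.1.trans⟩,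
    fun _ _ _ _ h h' => by simpa only [map_inf] using hr.2.1 _ _ _ _ h h',
    fun ι a b h => by simpa only [map_iSup] using hr.2.2 ι _ _ h⟩

theorem IsFrameCong.sup (hc : IsFrameCong c) {a b a' b' : A} (h : c a b) (h' : c a' b') :
    c (a ⊔ a') (b ⊔ b') := by
  simpa only [iSup_bool_eq, cond_true, cond_false] using
    hc.2.2 Bool (fun i => cond i a a') (fun i => cond i b b') (Bool.rec h' h)

theorem IsFrameCong.rel_sSup (hc : IsFrameCong c) (x : A) : c x (sSup {y | c x y}) := by
  have : Nonempty {y | c x y} := ⟨⟨x, hc.1.refl x⟩⟩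
  have h := hc.2.2 {y | c x y} (fun _ => x) Subtype.val Subtype.property
  rwa [ciSup_const, ← sSup_eq_iSup'] at h

theorem IsFrameCong.sSup_eq_of_rel (hc : IsFrameCong c) {x y : A} (h : c x y) :
    sSup {z | c y z} = sSup {z | c x z} := by
  congr 1
  ext z
  exact ⟨hc.1.trans h, hc.1.trans (hc.1.symm h)⟩

theorem IsFrameCong.sSup_mono (hc : IsFrameCong c) {x y : A} (h : x ≤ y) :
    sSup {z | c x z} ≤ sSup {z | c y z} := by
  have hy : c y (sSup {z | c x z} ⊔ y) := by
    simpa only [sup_eq_right.2 h] using hc.sup (hc.rel_sSup x) (hc.1.refl y)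
  exact le_sup_left.trans (le_sSup hy)

def IsFrameCong.nucleus (hc : IsFrameCong c) : Nucleus A where
  toFun x := sSup {y | c x y}
  map_inf' x y := le_antisymm (le_inf (hc.sSup_mono inf_le_left) (hc.sSup_mono inf_le_right))
    (le_sSup (hc.2.1 _ _ _ _ (hc.rel_sSup x) (hc.rel_sSup y)))
  idempotent' x := (hc.sSup_eq_of_rel (hc.rel_sSup x)).le
  le_apply' x := le_sSup (hc.1.refl x)

theorem IsFrameCong.nucleus_eq_iff (hc : IsFrameCong c) {x y : A} :
    hc.nucleus x = hc.nucleus y ↔ c x y := by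
  refine ⟨fun h => hc.1.trans (hc.rel_sSup x) ?_, fun h => (hc.sSup_eq_of_rel h).symm⟩
  exact (h ▸ hc.1.symm (hc.rel_sSup y) : c (hc.nucleus x) y)

end Congruences

namespace FrameHom

section LiftOfSurjective

variable {A B C : Type} [Order.Frame A] [Order.Frame B] [Order.Frame C]
  {q : FrameHom A B} (hq : Surjective q) {g : FrameHom A C}

theorem apply_surjInv_apply (hg : ∀ a b, q a = q b → g a = g b) (a : A) :
    g (surjInv hq (q a)) = g a :=
  hg _ _ (surjInv_eq hq _)

variable (q g)

noncomputable def liftOfSurjective (hg : ∀ a b, q a = q b → g a = g b) : FrameHom B C where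
  toFun y := g (surjInv hq y)
  map_inf' y z := by
    obtain ⟨a, rfl⟩ := hq y
    obtain ⟨b, rfl⟩ := hq z
    simp only [← map_inf, apply_surjInv_apply hq hg]
  map_top' := by
    show g (surjInv hq ⊤) = ⊤
    rw [← map_top q, apply_surjInv_apply hq hg, map_top]
  map_sSup' S := by
    obtain ⟨T, rfl⟩ : ∃ T, q '' T = S :=
      ⟨surjInv hq '' S, by simp only [Set.image_image, surjInv_eq hq, Set.image_id']⟩
    simp only [← map_sSup, apply_surjInv_apply hq hg, Set.image_image]

variable {q g} {hg : ∀ a b, q a = q b → g a = g b}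

@[simp]
theorem liftOfSurjective_apply (a : A) : q.liftOfSurjective hq g hg (q a) = g a :=
  apply_surjInv_apply hq hg a

theorem liftOfSurjective_injective (h : ∀ a b, g a = g b → q a = q b) :
    Injective (q.liftOfSurjective hq g hg) := by
  intro y z hyz
  obtain ⟨a, rfl⟩ := hq y
  obtain ⟨b, rfl⟩ := hq z
  simp only [liftOfSurjective_apply] at hyz
  exact h a b hyz

end LiftOfSurjective

section InvOfBijective

variable {A B : Type} [Order.Frame A] [Order.Frame B] {f : FrameHom A B} (hf : Bijective f)

noncomputable def invOfBijective : FrameHom B A :=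
  f.liftOfSurjective hf.2 (FrameHom.id A) fun _ _ h => hf.1 h

@[simp]
theorem invOfBijective_apply (a : A) : invOfBijective hf (f a) = a :=
  liftOfSurjective_apply hf.2 a

@[simp]
theorem apply_invOfBijective (b : B) : f (invOfBijective hf b) = b := by
  obtain ⟨a, rfl⟩ := hf.2 b
  rw [invOfBijective_apply]

end InvOfBijective

end FrameHom

namespace IsFrameCong

variable {A B : Type} [Order.Frame A] [Order.Frame B] {c : B → B → Prop} (hc : IsFrameCong c)

abbrev Quotient : Type := Set.range hc.nucleus

def mk : FrameHom B hc.Quotient := hc.nucleus.restrict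

theorem mk_surjective : Surjective hc.mk := Set.rangeFactorization_surjective

theorem mk_eq_iff {x y : B} : hc.mk x = hc.mk y ↔ c x y := by
  rw [← hc.nucleus_eq_iff, Subtype.ext_iff]
  rfl

noncomputable def comapLift (e : FrameHom A B) : FrameHom (hc.comap e).Quotient hc.Quotient :=
  (hc.comap e).mk.liftOfSurjective (hc.comap e).mk_surjective (hc.mk.comp e) fun _ _ h =>
    hc.mk_eq_iff.2 ((hc.comap e).mk_eq_iff.1 h)

@[simp]
theorem comapLift_mk (e : FrameHom A B) (a : A) :
    hc.comapLift e ((hc.comap e).mk a) = hc.mk (e a) :=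
  FrameHom.liftOfSurjective_apply _ a

theorem comapLift_injective (e : FrameHom A B) : Injective (hc.comapLift e) :=
  FrameHom.liftOfSurjective_injective _ fun _ _ h => (hc.comap e).mk_eq_iff.2 (hc.mk_eq_iff.1 h)

end IsFrameCong

section FreeFrames

variable {Q R : Type} [Order.Frame Q] [Order.Frame R]

def propFrameHom : FrameHom Prop Q where
  toFun p := ⨆ _ : p, ⊤
  map_inf' p p' := by by_cases hp : p <;> by_cases hp' : p' <;> simp [hp, hp']
  map_top' := by simp
  map_sSup' S := by simp only [sSup_image, sSup_Prop_eq, iSup_exists, iSup_and]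

instance : Subsingleton (FrameHom Prop Q) where
  allEq g g' := by
    ext p
    rcases Classical.propComplete p with rfl | rfl
    · exact (map_top g).trans (map_top g').symm
    · exact (map_bot g).trans (map_bot g').symm

theorem FrameHom.injective_of_prop [Nontrivial Q] (g : FrameHom Prop Q) : Injective g := by
  have h : g True ≠ g False := by
    show g ⊤ ≠ g ⊥
    rw [map_top, map_bot]
    exact top_ne_bot
  intro p p' hpp'
  rcases Classical.propComplete p with rfl | rfl <;>
    rcases Classical.propComplete p' with rfl | rfl
  exacts [rfl, absurd hpp' h, absurd hpp'.symm h, rfl]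

instance {α : Type} [Preorder α] [Nonempty α] : Nontrivial (LowerSet α) :=
  ⟨⊥, ⊤, fun h => by simpa using SetLike.ext_iff.1 h (Classical.arbitrary α)⟩

def chainFrameHom (a : Q) : FrameHom (LowerSet Bool) Q where
  toFun U := ⨆ x ∈ U, cond x ⊤ a
  map_inf' U V := by
    have hmono : Monotone fun U : LowerSet Bool => ⨆ x ∈ U, cond x ⊤ a :=
      fun _ _ h => biSup_mono fun _ hx => h hx
    rcases le_total U V with h | h
    · simp only [inf_of_le_left h, inf_of_le_left (hmono h)]
    · simp only [inf_of_le_right h, inf_of_le_right (hmono h)]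
  map_top' := top_unique (le_iSup₂_of_le true trivial le_rfl)
  map_sSup' S := by
    simp only [sSup_image, LowerSet.mem_sSup_iff, iSup_exists, iSup_and]
    exact iSup_comm.trans (iSup_congr fun _ => iSup_comm)

theorem chainFrameHom_Iic_false (a : Q) : chainFrameHom a (LowerSet.Iic false) = a := by
  simp [chainFrameHom, iSup_bool_eq]

theorem FrameHom.comp_chainFrameHom (g : FrameHom Q R) (a : Q) :
    g.comp (chainFrameHom a) = chainFrameHom (g a) := by
  ext U
  simp only [FrameHom.comp_apply, chainFrameHom, FrameHom.coe_mk, InfTopHom.coe_mk, InfHom.coe_mk,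
    map_iSup]
  exact iSup_congr fun x => iSup_congr fun _ => by cases x <;> simp

end FreeFrames

namespace BiframeHom

variable {L M : Biframe}

theorem h0_e1 (f : BiframeHom L M) (a : L.L1) : f.h0 (L.e1 a) = M.e1 (f.h1 a) :=
  DFunLike.congr_fun f.comm1 a

theorem h0_e2 (f : BiframeHom L M) (a : L.L2) : f.h0 (L.e2 a) = M.e2 (f.h2 a) :=
  DFunLike.congr_fun f.comm2 a

theorem h0_e1_eq_iff (f : BiframeHom L M) {a b : L.L1} :
    f.h0 (L.e1 a) = f.h0 (L.e1 b) ↔ f.h1 a = f.h1 b := by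
  rw [f.h0_e1, f.h0_e1, M.inj1.eq_iff]

theorem h0_e2_eq_iff (f : BiframeHom L M) {a b : L.L2} :
    f.h0 (L.e2 a) = f.h0 (L.e2 b) ↔ f.h2 a = f.h2 b := by
  rw [f.h0_e2, f.h0_e2, M.inj2.eq_iff]

theorem ext_of_h1_h2 {f g : BiframeHom L M} (h1 : f.h1 = g.h1) (h2 : f.h2 = g.h2) : f = g := by
  refine BiframeHom.ext (FrameHom.ext fun x => ?_) h1 h2
  obtain ⟨A, rfl⟩ := L.gen x
  simp only [map_sSup, Set.image_image, map_inf, h0_e1, h0_e2, h1, h2]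

theorem surjective_h0 (f : BiframeHom L M) (h1 : Surjective f.h1) (h2 : Surjective f.h2) :
    Surjective f.h0 := by
  intro y
  obtain ⟨A, rfl⟩ := M.gen y
  refine ⟨sSup ((fun p => L.e1 (surjInv h1 p.1) ⊓ L.e2 (surjInv h2 p.2)) '' A), ?_⟩
  simp only [map_sSup, Set.image_image, map_inf, h0_e1, h0_e2, surjInv_eq]

theorem isEpi_of_surjective (f : BiframeHom L M) (h1 : Surjective f.h1) (h2 : Surjective f.h2) :
    f.IsEpi := fun _ _ _ h => ext_of_h1_h2
  ((FrameHom.cancel_right h1).1 (congrArg BiframeHom.h1 h))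
  ((FrameHom.cancel_right h2).1 (congrArg BiframeHom.h2 h))

theorem isMono_of_injective (m : BiframeHom L M) (h1 : Injective m.h1) (h2 : Injective m.h2) :
    m.IsMono := fun _ _ _ h => ext_of_h1_h2
  ((FrameHom.cancel_left h1).1 (congrArg BiframeHom.h1 h))
  ((FrameHom.cancel_left h2).1 (congrArg BiframeHom.h2 h))

theorem isIso_of_bijective (m : BiframeHom L M) (h0 : Bijective m.h0) (h1 : Bijective m.h1)
    (h2 : Bijective m.h2) : m.IsIso := by
  refine ⟨⟨.invOfBijective h0, .invOfBijective h1, .invOfBijective h2, ?_, ?_⟩,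
    ext_of_h1_h2 ?_ ?_, ext_of_h1_h2 ?_ ?_⟩ <;> refine FrameHom.ext fun x => ?_
  · obtain ⟨a, rfl⟩ := h1.2 x
    simp [← h0_e1]
  · obtain ⟨a, rfl⟩ := h2.2 x
    simp [← h0_e2]
  all_goals simp [BiframeHom.comp, BiframeHom.id]

theorem IsIso.injective_h0 {m : BiframeHom L M} (hm : m.IsIso) : Injective m.h0 := by
  obtain ⟨w, hw, -⟩ := hm
  exact LeftInverse.injective (g := w.h0) (DFunLike.congr_fun (congrArg BiframeHom.h0 hw))

end BiframeHom

namespace Biframe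

/-- The biframe `(𝟑, 𝟑, 𝟐)`, free on one generator of the first component (`LowerSet Bool` is the
three-element chain). -/
def free1 : Biframe where
  L0 := LowerSet Bool
  L1 := LowerSet Bool
  L2 := Prop
  e1 := FrameHom.id _
  e2 := propFrameHom
  inj1 := injective_id
  inj2 := FrameHom.injective_of_prop _
  gen x := ⟨{(x, True)}, by simp [propFrameHom]⟩

def free2 : Biframe where
  L0 := LowerSet Bool
  L1 := Prop
  L2 := LowerSet Bool
  e1 := propFrameHom
  e2 := FrameHom.id _
  inj1 := FrameHom.injective_of_prop _
  inj2 := injective_id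
  gen x := ⟨{(True, x)}, by simp [propFrameHom]⟩

def free1Hom (L : Biframe) (a : L.L1) : BiframeHom free1 L where
  h0 := L.e1.comp (chainFrameHom a)
  h1 := chainFrameHom a
  h2 := propFrameHom
  comm1 := rfl
  comm2 := Subsingleton.elim (α := FrameHom Prop L.L0) _ _

def free2Hom (L : Biframe) (a : L.L2) : BiframeHom free2 L where
  h0 := L.e2.comp (chainFrameHom a)
  h1 := propFrameHom
  h2 := chainFrameHom a
  comm1 := Subsingleton.elim (α := FrameHom Prop L.L0) _ _
  comm2 := rfl

end Biframe

namespace BiframeHom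

variable {L M : Biframe} {m : BiframeHom L M}

theorem IsMono.injective_h1 (hm : m.IsMono) : Injective m.h1 := by
  intro a b hab
  have h := hm _ (L.free1Hom a) (L.free1Hom b) <| ext_of_h1_h2
    ((m.h1.comp_chainFrameHom a).trans <| (congrArg chainFrameHom hab).trans
      (m.h1.comp_chainFrameHom b).symm)
    (Subsingleton.elim (α := FrameHom Prop M.L2) _ _)
  calc a = chainFrameHom a (LowerSet.Iic false) := (chainFrameHom_Iic_false a).symm
    _ = chainFrameHom b (LowerSet.Iic false) := DFunLike.congr_fun (congrArg h1 h) _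
    _ = b := chainFrameHom_Iic_false b

theorem IsMono.injective_h2 (hm : m.IsMono) : Injective m.h2 := by
  intro a b hab
  have h := hm _ (L.free2Hom a) (L.free2Hom b) <| ext_of_h1_h2
    (Subsingleton.elim (α := FrameHom Prop M.L1) _ _)
    ((m.h2.comp_chainFrameHom a).trans <| (congrArg chainFrameHom hab).trans
      (m.h2.comp_chainFrameHom b).symm)
  calc a = chainFrameHom a (LowerSet.Iic false) := (chainFrameHom_Iic_false a).symm
    _ = chainFrameHom b (LowerSet.Iic false) := DFunLike.congr_fun (congrArg h2 h) _
    _ = b := chainFrameHom_Iic_false b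

end BiframeHom

namespace Biframe

section Quotient

variable (L : Biframe) {c : L.L0 → L.L0 → Prop} (hc : IsFrameCong c)

theorem quot_gen (x : hc.Quotient) :
    ∃ A : Set ((hc.comap L.e1).Quotient × (hc.comap L.e2).Quotient),
      x = sSup ((fun p => hc.comapLift L.e1 p.1 ⊓ hc.comapLift L.e2 p.2) '' A) := by
  obtain ⟨y, rfl⟩ := hc.mk_surjective x
  obtain ⟨A, rfl⟩ := L.gen y
  refine ⟨Prod.map (hc.comap L.e1).mk (hc.comap L.e2).mk '' A, ?_⟩
  simp only [map_sSup, Set.image_image, map_inf, Prod.map_fst, Prod.map_snd,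
    IsFrameCong.comapLift_mk]

noncomputable abbrev quot : Biframe where
  L0 := hc.Quotient
  L1 := (hc.comap L.e1).Quotient
  L2 := (hc.comap L.e2).Quotient
  e1 := hc.comapLift L.e1
  e2 := hc.comapLift L.e2
  inj1 := hc.comapLift_injective L.e1
  inj2 := hc.comapLift_injective L.e2
  gen := L.quot_gen hc

noncomputable def quotHom : BiframeHom L (L.quot hc) where
  h0 := hc.mk
  h1 := (hc.comap L.e1).mk
  h2 := (hc.comap L.e2).mk
  comm1 := FrameHom.ext fun a => (hc.comapLift_mk L.e1 a).symm
  comm2 := FrameHom.ext fun a => (hc.comapLift_mk L.e2 a).symm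

variable {L} {N : Biframe} (f : BiframeHom L N) (hf : c ≤ fun x y => f.h0 x = f.h0 y)

noncomputable def quotLift : BiframeHom (L.quot hc) N where
  h0 := hc.mk.liftOfSurjective hc.mk_surjective f.h0 fun _ _ h => hf _ _ (hc.mk_eq_iff.1 h)
  h1 := (hc.comap L.e1).mk.liftOfSurjective (hc.comap L.e1).mk_surjective f.h1 fun _ _ h =>
    f.h0_e1_eq_iff.1 (hf _ _ ((hc.comap L.e1).mk_eq_iff.1 h))
  h2 := (hc.comap L.e2).mk.liftOfSurjective (hc.comap L.e2).mk_surjective f.h2 fun _ _ h =>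
    f.h0_e2_eq_iff.1 (hf _ _ ((hc.comap L.e2).mk_eq_iff.1 h))
  comm1 := (FrameHom.cancel_right (hc.comap L.e1).mk_surjective).1 <| FrameHom.ext fun a => by
    simp [BiframeHom.h0_e1]
  comm2 := (FrameHom.cancel_right (hc.comap L.e2).mk_surjective).1 <| FrameHom.ext fun a => by
    simp [BiframeHom.h0_e2]

theorem quotLift_h0_mk (x : L.L0) : (quotLift hc f hf).h0 (hc.mk x) = f.h0 x := by
  simp [quotLift]

theorem quotLift_h1_mk (a : L.L1) : (quotLift hc f hf).h1 ((hc.comap L.e1).mk a) = f.h1 a := by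
  simp [quotLift]

theorem quotLift_h2_mk (a : L.L2) : (quotLift hc f hf).h2 ((hc.comap L.e2).mk a) = f.h2 a := by
  simp [quotLift]

theorem quotLift_comp : (quotLift hc f hf).comp (L.quotHom hc) = f :=
  BiframeHom.ext (FrameHom.ext (quotLift_h0_mk hc f hf)) (FrameHom.ext (quotLift_h1_mk hc f hf))
    (FrameHom.ext (quotLift_h2_mk hc f hf))

theorem quotLift_isMono (h1 : ∀ a b, f.h1 a = f.h1 b → c (L.e1 a) (L.e1 b))
    (h2 : ∀ a b, f.h2 a = f.h2 b → c (L.e2 a) (L.e2 b)) : (quotLift hc f hf).IsMono := by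
  refine BiframeHom.isMono_of_injective _ (fun u v huv => ?_) fun u v huv => ?_
  · obtain ⟨a, rfl⟩ := (hc.comap L.e1).mk_surjective u
    obtain ⟨b, rfl⟩ := (hc.comap L.e1).mk_surjective v
    rw [quotLift_h1_mk, quotLift_h1_mk] at huv
    exact (hc.comap L.e1).mk_eq_iff.2 (h1 a b huv)
  · obtain ⟨a, rfl⟩ := (hc.comap L.e2).mk_surjective u
    obtain ⟨b, rfl⟩ := (hc.comap L.e2).mk_surjective v
    rw [quotLift_h2_mk, quotLift_h2_mk] at huv
    exact (hc.comap L.e2).mk_eq_iff.2 (h2 a b huv)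

end Quotient

section GenByComponents

variable (L : Biframe)

/-- The congruence of the meet `𝒮(e_{L₁})(r₁) ∧ 𝒮(e_{L₂})(r₂)` in `𝒮(L₀)`, where `r₁`, `r₂` are
the traces of `r` on the components. -/
def genByComponents (r : L.L0 → L.L0 → Prop) : L.L0 → L.L0 → Prop :=
  congGen {p | imCong1 L (fun a b => r (L.e1 a) (L.e1 b)) p.1 p.2 ∨
    imCong2 L (fun a b => r (L.e2 a) (L.e2 b)) p.1 p.2}

variable {L} {r s : L.L0 → L.L0 → Prop}

theorem isFrameCong_genByComponents (r : L.L0 → L.L0 → Prop) :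
    IsFrameCong (L.genByComponents r) :=
  isFrameCong_congGen _

theorem genByComponents_e1 {a b : L.L1} (h : r (L.e1 a) (L.e1 b)) :
    L.genByComponents r (L.e1 a) (L.e1 b) :=
  congGen_of_mem (Or.inl (congGen_of_mem ⟨a, b, h, rfl⟩))

theorem genByComponents_e2 {a b : L.L2} (h : r (L.e2 a) (L.e2 b)) :
    L.genByComponents r (L.e2 a) (L.e2 b) :=
  congGen_of_mem (Or.inr (congGen_of_mem ⟨a, b, h, rfl⟩))

theorem genByComponents_le_of (hs : IsFrameCong s)
    (h1 : ∀ a b, r (L.e1 a) (L.e1 b) → s (L.e1 a) (L.e1 b))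
    (h2 : ∀ a b, r (L.e2 a) (L.e2 b) → s (L.e2 a) (L.e2 b)) : L.genByComponents r ≤ s := by
  refine congGen_le hs ?_
  rintro ⟨x, y⟩ (h | h)
  · exact congGen_le hs (by rintro _ ⟨a, b, hab, rfl⟩; exact h1 a b hab) x y h
  · exact congGen_le hs (by rintro _ ⟨a, b, hab, rfl⟩; exact h2 a b hab) x y h

theorem genByComponents_le (hr : IsFrameCong r) : L.genByComponents r ≤ r :=
  genByComponents_le_of hr (fun _ _ => id) fun _ _ => id

theorem genByComponents_mono (h : r ≤ s) : L.genByComponents r ≤ L.genByComponents s :=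
  genByComponents_le_of (isFrameCong_genByComponents s)
    (fun _ _ hab => genByComponents_e1 (h _ _ hab)) fun _ _ hab => genByComponents_e2 (h _ _ hab)

variable (L)

theorem genByComponents_imCong1 (r1 : L.L1 → L.L1 → Prop) :
    L.genByComponents (imCong1 L r1) = imCong1 L r1 := by
  refine le_antisymm (genByComponents_le (isFrameCong_congGen _)) ?_
  refine congGen_le (isFrameCong_genByComponents _) ?_
  rintro _ ⟨a, b, hab, rfl⟩
  exact genByComponents_e1 (congGen_of_mem ⟨a, b, hab, rfl⟩)

theorem genByComponents_imCong2 (r2 : L.L2 → L.L2 → Prop) :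
    L.genByComponents (imCong2 L r2) = imCong2 L r2 := by
  refine le_antisymm (genByComponents_le (isFrameCong_congGen _)) ?_
  refine congGen_le (isFrameCong_genByComponents _) ?_
  rintro _ ⟨a, b, hab, rfl⟩
  exact genByComponents_e2 (congGen_of_mem ⟨a, b, hab, rfl⟩)

theorem genByComponents_congGen_or {c1 c2 : L.L0 → L.L0 → Prop}
    (h1 : L.genByComponents c1 = c1) (h2 : L.genByComponents c2 = c2) :
    L.genByComponents (congGen {p | c1 p.1 p.2 ∨ c2 p.1 p.2}) =
      congGen {p | c1 p.1 p.2 ∨ c2 p.1 p.2} := by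
  refine le_antisymm (genByComponents_le (isFrameCong_congGen _)) ?_
  refine congGen_le (isFrameCong_genByComponents _) ?_
  rintro ⟨x, y⟩ (h | h)
  · rw [← h1] at h
    exact genByComponents_mono (fun x y h => congGen_of_mem (Or.inl h)) x y h
  · rw [← h2] at h
    exact genByComponents_mono (fun x y h => congGen_of_mem (Or.inr h)) x y h

end GenByComponents

theorem isExtremalEpi_quotHom {L : Biframe} {c : L.L0 → L.L0 → Prop} (hc : IsFrameCong c)
    (hgen : c ≤ L.genByComponents c) : (L.quotHom hc).IsExtremalEpi := by
  refine ⟨BiframeHom.isEpi_of_surjective _ (hc.comap L.e1).mk_surjective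
    (hc.comap L.e2).mk_surjective, fun N h m hm hfac => ?_⟩
  have fac0 : m.h0 ∘ h.h0 = hc.mk :=
    congrArg (fun f : BiframeHom L (L.quot hc) => ⇑f.h0) hfac.symm
  have fac1 : m.h1 ∘ h.h1 = (hc.comap L.e1).mk :=
    congrArg (fun f : BiframeHom L (L.quot hc) => ⇑f.h1) hfac.symm
  have fac2 : m.h2 ∘ h.h2 = (hc.comap L.e2).mk :=
    congrArg (fun f : BiframeHom L (L.quot hc) => ⇑f.h2) hfac.symm
  have surj0 : Surjective (m.h0 ∘ h.h0) := fac0 ▸ hc.mk_surjective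
  have surj1 : Surjective (m.h1 ∘ h.h1) := fac1 ▸ (hc.comap L.e1).mk_surjective
  have surj2 : Surjective (m.h2 ∘ h.h2) := fac2 ▸ (hc.comap L.e2).mk_surjective
  have inj1 := hm.injective_h1
  have inj2 := hm.injective_h2
  have hsurj : Surjective h.h0 :=
    h.surjective_h0 (surj1.of_comp_left inj1) (surj2.of_comp_left inj2)
  -- `c` is generated by its traces on the components, where `m` is injective
  have hker : c ≤ fun x y => h.h0 x = h.h0 y := by
    refine hgen.trans (genByComponents_le_of (isFrameCong_ker _) (fun a b hab => ?_)
      fun a b hab => ?_)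
    · refine h.h0_e1_eq_iff.2 (inj1 ?_)
      exact (congrFun fac1 a).trans <|
        ((hc.comap L.e1).mk_eq_iff.2 hab).trans (congrFun fac1 b).symm
    · refine h.h0_e2_eq_iff.2 (inj2 ?_)
      exact (congrFun fac2 a).trans <|
        ((hc.comap L.e2).mk_eq_iff.2 hab).trans (congrFun fac2 b).symm
  have inj0 : Injective m.h0 := by
    intro u v huv
    obtain ⟨x, rfl⟩ := hsurj u
    obtain ⟨y, rfl⟩ := hsurj v
    exact hker x y <| hc.mk_eq_iff.1 <|
      (congrFun fac0 x).symm.trans (huv.trans (congrFun fac0 y))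
  exact m.isIso_of_bijective ⟨inj0, surj0.of_comp⟩ ⟨inj1, surj1.of_comp⟩ ⟨inj2, surj2.of_comp⟩

end Biframe

theorem IsSubbilocaleRep.genByComponents_eq {L : Biframe} {r : L.L0 → L.L0 → Prop}
    (hr : IsSubbilocaleRep L r) : L.genByComponents r = r := by
  obtain ⟨N, f, ⟨-, hext⟩, hrf⟩ := hr
  obtain rfl : r = fun x y => f.h0 x = f.h0 y := funext₂ fun x y => propext (hrf x y)
  refine le_antisymm (Biframe.genByComponents_le (isFrameCong_ker f.h0)) fun x y hxy => ?_
  have hc := Biframe.isFrameCong_genByComponents (L := L) fun x y => f.h0 x = f.h0 y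
  have hcf := Biframe.genByComponents_le (isFrameCong_ker f.h0)
  have hmono := Biframe.quotLift_isMono hc f hcf
    (fun _ _ hab => Biframe.genByComponents_e1 (f.h0_e1_eq_iff.2 hab))
    fun _ _ hab => Biframe.genByComponents_e2 (f.h0_e2_eq_iff.2 hab)
  have hinj := (hext _ _ _ hmono (Biframe.quotLift_comp hc f hcf).symm).injective_h0
  refine hc.mk_eq_iff.1 (hinj ?_)
  rwa [Biframe.quotLift_h0_mk, Biframe.quotLift_h0_mk]

theorem isSubbilocaleRep_iff {L : Biframe} {r : L.L0 → L.L0 → Prop} :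
    IsSubbilocaleRep L r ↔ L.genByComponents r = r := by
  refine ⟨IsSubbilocaleRep.genByComponents_eq, fun hr => ?_⟩
  have hc : IsFrameCong r := hr ▸ Biframe.isFrameCong_genByComponents r
  exact ⟨L.quot hc, L.quotHom hc, Biframe.isExtremalEpi_quotHom hc hr.ge,
    fun _ _ => hc.mk_eq_iff.symm⟩

/-- For a biframe `L`, the lattice `𝒮(L)` of subbilocales (realized as kernel congruences
of extremal epimorphisms, ordered by reverse inclusion, inside the congruence lattice
realizing the coframe `𝒮(L₀)` of sublocales of the ambient frame) coincides with the
sub-meet-semilattice of `𝒮(L₀)` generated by `𝒮(e_{L₁})[𝒮(L₁)] ∪ 𝒮(e_{L₂})[𝒮(L₂)]`: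
the smallest collection of congruences containing the images of the sublocale lattices of
the two components and closed under binary meets of sublocales (i.e. joins of congruences,
`(c₁, c₂) ↦ congGen (c₁ ∪ c₂)`). -/
theorem subbilocales_eq_meet_semilattice_generated (L : Biframe)
    (X : Set (L.L0 → L.L0 → Prop))
    (hX : X = ⋂₀ {Y : Set (L.L0 → L.L0 → Prop) |
      (∀ r1 : L.L1 → L.L1 → Prop, IsFrameCong r1 → imCong1 L r1 ∈ Y) ∧
      (∀ r2 : L.L2 → L.L2 → Prop, IsFrameCong r2 → imCong2 L r2 ∈ Y) ∧
      (∀ c1 ∈ Y, ∀ c2 ∈ Y, congGen {p | c1 p.1 p.2 ∨ c2 p.1 p.2} ∈ Y)}) :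
    ∀ r : L.L0 → L.L0 → Prop, IsSubbilocaleRep L r ↔ r ∈ X := by
  subst hX
  intro r
  rw [isSubbilocaleRep_iff]
  constructor
  · rintro hr Y ⟨h1, h2, hjoin⟩
    have hc : IsFrameCong r := hr ▸ L.isFrameCong_genByComponents r
    rw [← hr]
    exact hjoin _ (h1 _ (hc.comap L.e1)) _ (h2 _ (hc.comap L.e2))
  · intro hr
    exact hr {s | L.genByComponents s = s} ⟨fun r1 _ => L.genByComponents_imCong1 r1,
      fun r2 _ => L.genByComponents_imCong2 r2,
      fun _ hc1 _ hc2 => L.genByComponents_congGen_or hc1 hc2⟩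
end
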